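/- Let v be an ab-monomial beginning with the letter a, let k ≥ 1 be an integer, and let x be either a or b. Then 2·φ_t(v·a·bᵏ·x) = 2·κ(v·a·bᵏ·x) + ω(v·a·b^{k+1}). -/

import Mathlib

open scoped TensorProduct

noncomputable section

namespace CD


/-- ab-words: `false` represents the letter `a`, `true` represents the letter `b`. -/
abbrev Word := List Bool

/-- The free associative ℤ-algebra ℤ⟨a,b⟩ on two noncommuting variables. -/
abbrev ZAB := MonoidAlgebra ℤ (FreeMonoid Bool)

/-- The ab-monomial associated to a word. -/
def mon (w : Word) : ZAB := MonoidAlgebra.single (FreeMonoid.ofList w) 1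

/-- The variable `a`. -/
def genA : ZAB := mon [false]
/-- The variable `b`. -/
def genB : ZAB := mon [true]
/-- `c = a + b`. -/
def genC : ZAB := genA + genB
/-- `d = ab + ba`. -/
def genD : ZAB := genA * genB + genB * genA
/-- `a - b`. -/
def amb : ZAB := genA - genB

/-- Extend a function defined on ab-monomials to a ℤ-linear map on ℤ⟨a,b⟩. -/
def lin (f : Word → ZAB) : ZAB →ₗ[ℤ] ZAB :=
  Finsupp.lift ZAB ℤ (FreeMonoid Bool) (fun w => f (FreeMonoid.toList w)) ∘ₗ
    (MonoidAlgebra.coeffLinearEquiv ℤ).toLinearMap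

/-- κ : κ(aᵐ) = (a-b)ᵐ, and 0 on all other ab-monomials. -/
def kappaW (w : Word) : ZAB :=
  if ∀ x ∈ w, x = false then amb ^ w.length else 0

/-- β : β(bᵐ) = (a-b)ᵐ, and 0 on all other ab-monomials. -/
def betaW (w : Word) : ZAB :=
  if ∀ x ∈ w, x = true then amb ^ w.length else 0

/-- η : η(bᵐaᵏ) = 2·(a-b)^{m+k}, and 0 on all other ab-monomials. -/
def etaW (w : Word) : ZAB :=
  if List.IsChain (· ≥ ·) w then (2 : ℤ) • amb ^ w.length else 0

/-- λ_t : λ_t(bᵐ) = (a-b)ᵐ, λ_t(bᵐa) = (a-b)^{m+1}, and 0 on all other ab-monomials. -/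
def lamTW (w : Word) : ZAB :=
  if List.IsChain (· ≥ ·) w ∧ w.count false ≤ 1 then amb ^ w.length else 0

/-- λ_ub = η - 2·β. -/
def lamUbW (w : Word) : ZAB := etaW w - (2 : ℤ) • betaW w

/-- ω : first replace each occurrence of ab by 2d, then each remaining letter by c. -/
def omegaW : Word → ZAB
  | [] => 1
  | false :: true :: w => ((2 : ℤ) • genD) * omegaW w
  | _ :: w => genC * omegaW w

/-- H′ : removes the last letter of an ab-monomial (`H′(1) = 0`). -/
def HpW (w : Word) : ZAB := if w = [] then 0 else mon w.dropLast

/-- r : r(1) = 0, r(v·a) = v, r(v·b) = 0. -/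
def rW (w : Word) : ZAB := if w.getLast? = some false then mon w.dropLast else 0

/-- The reversal involution on ab-monomials. -/
def revW (w : Word) : ZAB := mon w.reverse

/-- `conv F G (w) = Σ_w F(w₍₁₎)·b·G(w₍₂₎)`, the sum over the coproduct of the word `w`,
i.e. over all ways of removing one letter from `w`, splitting it in two pieces. -/
def conv (F G : Word → ZAB) (w : Word) : ZAB :=
  ∑ i ∈ Finset.range w.length, F (w.take i) * genB * G (w.drop (i + 1))

/-- `tailChain lam j (w) = Σ_w η(w₍₁₎)·b·η(w₍₂₎)·b ⋯ b·η(w₍ⱼ₎)·b·lam(w₍ⱼ₊₁₎)`: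
a chain of `j` η's followed by the map `lam`, summed over the iterated coproduct. -/
def tailChain (lam : Word → ZAB) : ℕ → Word → ZAB
  | 0 => lam
  | j + 1 => conv etaW (tailChain lam j)

/-- φ_k : φ_1 = κ and, for k ≥ 2, `φ_k(v) = Σ_v κ(v₍₁₎)·b·η(v₍₂₎)·b ⋯ b·η(v₍ₖ₎)`,
the sum over the iterated coproduct Δ^{k-1}. -/
def phiK : ℕ → Word → ZAB
  | 0 => fun _ => 0
  | 1 => kappaW
  | k + 2 => conv kappaW (tailChain etaW k)

/-- φ_{t,k} : φ_{t,1} = κ and, for k ≥ 2,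
`φ_{t,k}(v) = Σ_v κ(v₍₁₎)·b·η(v₍₂₎)·b ⋯ b·η(v₍ₖ₋₁₎)·b·λ_t(v₍ₖ₎)`. -/
def phiTK : ℕ → Word → ZAB
  | 0 => fun _ => 0
  | 1 => kappaW
  | k + 2 => conv kappaW (tailChain lamTW k)

/-- φ_{ub,k} : φ_{ub,1} = κ and, for k ≥ 2,
`φ_{ub,k}(v) = Σ_v κ(v₍₁₎)·b·η(v₍₂₎)·b ⋯ b·η(v₍ₖ₋₁₎)·b·λ_ub(v₍ₖ₎)`. -/
def phiUbK : ℕ → Word → ZAB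
  | 0 => fun _ => 0
  | 1 => kappaW
  | k + 2 => conv kappaW (tailChain lamUbW k)

/-- φ = Σ_{k ≥ 1} φ_k (on a word of length ℓ, only terms with k ≤ ℓ + 1 are nonzero). -/
def phiW (w : Word) : ZAB := ∑ k ∈ Finset.range (w.length + 2), phiK k w

/-- φ_t = Σ_{k ≥ 1} φ_{t,k}. -/
def phiTW (w : Word) : ZAB := ∑ k ∈ Finset.range (w.length + 2), phiTK k w

/-- φ_ub = Σ_{k ≥ 1} φ_{ub,k}. -/
def phiUbW (w : Word) : ZAB := ∑ k ∈ Finset.range (w.length + 2), phiUbK k w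

/-- The coproduct Δ on ℤ⟨a,b⟩: Δ(u₁u₂⋯uₙ) = Σᵢ u₁⋯u_{i-1} ⊗ u_{i+1}⋯uₙ. -/
def Delta : ZAB →ₗ[ℤ] (ZAB ⊗[ℤ] ZAB) :=
  Finsupp.lift (ZAB ⊗[ℤ] ZAB) ℤ (FreeMonoid Bool)
    (fun w => ∑ i ∈ Finset.range (FreeMonoid.toList w).length,
      mon ((FreeMonoid.toList w).take i) ⊗ₜ[ℤ] mon ((FreeMonoid.toList w).drop (i + 1))) ∘ₗ
    (MonoidAlgebra.coeffLinearEquiv ℤ).toLinearMap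

/-- For linear maps F, G, the linear map `u ⊗ w ↦ F(u)·b·G(w)`; applying it to Δ(v)
gives the Sweedler sum `Σ_v F(v₍₁₎)·b·G(v₍₂₎)`. -/
def sandwich (F G : ZAB →ₗ[ℤ] ZAB) : (ZAB ⊗[ℤ] ZAB) →ₗ[ℤ] ZAB :=
  TensorProduct.lift
    (((LinearMap.mul ℤ ZAB).comp ((LinearMap.mulRight ℤ genB).comp F)).compl₂ G)


/-!
Let `G = tailSum lamTW` be the sum of all tails `η·b⋯b·η·b·λ_t` of the chains defining `φ_t`,
so that `φ_t = κ + Σ κ·b·G` and `G = λ_t + Σ η·b·G`. Since `λ_t(w z) = β(w)·(a-b)`, and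
splitting off the last letter of `w z` leaves `η(w)·b`, the function `w ↦ G(w z)` solves
`Ω(w) = β(w)·(a-b) + η(w)·b + Σ_w η(w₍₁₎)·b·Ω(w₍₂₎)`, a recursion that determines `Ω` by
induction on the length. A case analysis on the first two letters of `w` shows that
`w ↦ ω(w b)` solves it too, so `G(w z) = ω(w b)`. For `v = a r` with a `b` in `r`, `2κ = η` on
every prefix of `v` while `κ(v) = β(v) = η(v) = 0`, and the recursion for `ω(v b)` becomes
`ω(v b) = 2·Σ_v κ(v₍₁₎)·b·G(v₍₂₎ x) = 2φ_t(v x) - 2κ(v x)`.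
-/

section Conv

variable (F G : Word → ZAB)

@[simp]
lemma conv_nil : conv F G [] = 0 := by
  simp [conv]

lemma conv_cons (y : Bool) (w : Word) :
    conv F G (y :: w) = F [] * genB * G w + conv (fun u => F (y :: u)) G w := by
  rw [conv, List.length_cons, Finset.sum_range_succ', add_comm]
  rfl

lemma conv_append_singleton (w : Word) (z : Bool) :
    conv F G (w ++ [z]) = conv F (fun u => G (u ++ [z])) w + F w * genB * G [] := by
  rw [conv, List.length_append, List.length_singleton, Finset.sum_range_succ, List.take_left,
    List.drop_eq_nil_of_le (by simp), conv]
  congr 1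
  refine Finset.sum_congr rfl fun i hi => ?_
  have hi : i < w.length := Finset.mem_range.1 hi
  rw [List.take_append_of_le_length hi.le, List.drop_append_of_le_length hi]

lemma conv_congr {F' G' : Word → ZAB} {w : Word}
    (hF : ∀ i < w.length, F (w.take i) = F' (w.take i))
    (hG : ∀ u, u.length < w.length → G u = G' u) : conv F G w = conv F' G' w := by
  refine Finset.sum_congr rfl fun i hi => ?_
  have hi : i < w.length := Finset.mem_range.1 hi
  rw [hF i hi, hG _ (by rw [List.length_drop]; omega)]

lemma conv_mul_left (p : ZAB) (w : Word) :
    conv (fun u => p * F u) G w = p * conv F G w := by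
  simp only [conv, Finset.mul_sum, mul_assoc]

lemma smul_conv (n : ℤ) (w : Word) : n • conv F G w = conv (fun u => n • F u) G w := by
  simp only [conv, Finset.smul_sum, smul_mul_assoc]

lemma eq_of_eq_add_conv {F h f g : Word → ZAB} (hf : ∀ w, f w = h w + conv F f w)
    (hg : ∀ w, g w = h w + conv F g w) : f = g := by
  funext w
  induction hn : w.length using Nat.strong_induction_on generalizing w with
  | _ n ih => rw [hf, hg, conv_congr F f (fun _ _ => rfl) fun u hu => ih _ (hn ▸ hu) u rfl]

end Conv


section Letters

variable (w : Word)

lemma etaW_cons {y : Bool} (hy : ∀ z ∈ w.head?, y ≥ z) : etaW (y :: w) = amb * etaW w := by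
  unfold etaW
  by_cases h : List.IsChain (· ≥ ·) w
  · rw [if_pos (List.isChain_cons.2 ⟨hy, h⟩), if_pos h, List.length_cons, pow_succ',
      mul_smul_comm]
  · rw [if_neg (h <| List.isChain_cons.1 · |>.2), if_neg h, mul_zero]

@[simp]
lemma etaW_nil : etaW [] = 2 := by
  simp [etaW]

lemma etaW_false_cons_eq_zero {w : Word} (hw : true ∈ w) : etaW (false :: w) = 0 := by
  have : ¬ List.IsChain (· ≥ ·) (false :: w) := by
    rw [List.isChain_iff_pairwise, List.pairwise_cons]
    exact fun h => absurd (h.1 true hw) (by decide)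
  rw [etaW, if_neg this]

lemma kappaW_eq_zero {w : Word} (hw : true ∈ w) : kappaW w = 0 :=
  if_neg fun h => absurd (h true hw) (by decide)

lemma head?_take_false_cons (i : ℕ) : ∀ z ∈ ((false :: w).take i).head?, false ≥ z := by
  rw [List.head?_take]
  split_ifs <;> simp

lemma two_smul_kappaW {w : Word} (hw : ∀ z ∈ w.head?, false ≥ z) :
    (2 : ℤ) • kappaW w = etaW w := by
  have : (∀ x ∈ w, x = false) ↔ List.IsChain (· ≥ ·) w := by
    rw [List.isChain_iff_pairwise]
    cases w with
    | nil => simp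
    | cons y u =>
      obtain rfl : y = false := le_bot_iff.1 (hw y rfl)
      simp only [List.mem_cons, forall_eq_or_imp, true_and, List.pairwise_cons]
      refine ⟨fun h => ⟨fun a ha => (h a ha).le, List.pairwise_of_forall_mem_list ?_⟩,
        fun h a ha => le_bot_iff.1 (h.1 a ha)⟩
      intro a ha b hb
      rw [h a ha, h b hb]
  simp only [kappaW, etaW, this]
  split_ifs <;> simp

lemma betaW_true_cons : betaW (true :: w) = amb * betaW w := by
  simp only [betaW, List.mem_cons, forall_eq_or_imp, true_and, List.length_cons, pow_succ']
  split_ifs <;> simp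

lemma betaW_eq_zero {w : Word} (hw : false ∈ w) : betaW w = 0 :=
  if_neg fun h => absurd (h false hw) (by decide)

lemma lamTW_true_cons : lamTW (true :: w) = amb * lamTW w := by
  simp only [lamTW, List.isChain_cons, ge_iff_le, Bool.le_true, implies_true, true_and,
    List.count_cons, List.length_cons, pow_succ']
  split_ifs <;> simp_all

lemma lamTW_false_cons {w : Word} (hw : w ≠ []) : lamTW (false :: w) = 0 := by
  obtain ⟨z, u, rfl⟩ := List.exists_cons_of_ne_nil hw
  refine if_neg fun ⟨hc, hn⟩ => ?_
  obtain rfl : z = false := le_bot_iff.1 (List.isChain_cons_cons.1 hc).1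
  simp at hn

lemma lamTW_append_singleton (z : Bool) : lamTW (w ++ [z]) = betaW w * amb := by
  induction w with
  | nil => cases z <;> simp [lamTW, betaW]
  | cons y u ih =>
    cases y
    · rw [List.cons_append, lamTW_false_cons (by simp), betaW_eq_zero (by simp), zero_mul]
    · rw [List.cons_append, lamTW_true_cons, ih, betaW_true_cons, mul_assoc]

end Letters

section TailSum

variable (lam : Word → ZAB)

def tailSum (w : Word) : ZAB := ∑ j ∈ Finset.range (w.length + 1), tailChain lam j w

lemma tailChain_eq_zero_of_length_lt {j : ℕ} {w : Word} (h : w.length < j) :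
    tailChain lam j w = 0 := by
  induction j generalizing w with
  | zero => omega
  | succ j ih =>
    rw [tailChain, conv]
    refine Finset.sum_eq_zero fun i hi => ?_
    have hi : i < w.length := Finset.mem_range.1 hi
    rw [ih (by rw [List.length_drop]; omega), mul_zero]

lemma tailSum_eq_sum_range {w : Word} {n : ℕ} (h : w.length < n) :
    tailSum lam w = ∑ j ∈ Finset.range n, tailChain lam j w :=
  Finset.sum_subset (f := fun j => tailChain lam j w) (Finset.range_subset_range.2 h) fun _ _ hj =>
    tailChain_eq_zero_of_length_lt lam (by simpa using hj)

lemma conv_tailSum (F : Word → ZAB) (w : Word) :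
    conv F (tailSum lam) w = ∑ j ∈ Finset.range w.length, conv F (tailChain lam j) w := by
  have h : ∀ i ∈ Finset.range w.length, F (w.take i) * genB * tailSum lam (w.drop (i + 1)) =
      ∑ j ∈ Finset.range w.length, F (w.take i) * genB * tailChain lam j (w.drop (i + 1)) :=
    fun i hi => by
      have hi : i < w.length := Finset.mem_range.1 hi
      rw [tailSum_eq_sum_range lam (n := w.length) (by simp; omega), Finset.mul_sum]
  rw [conv, Finset.sum_congr rfl h, Finset.sum_comm]
  rfl

lemma tailSum_eq (w : Word) : tailSum lam w = lam w + conv etaW (tailSum lam) w := by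
  rw [conv_tailSum, tailSum, Finset.sum_range_succ']
  exact add_comm _ _

lemma phiTW_eq (w : Word) : phiTW w = kappaW w + conv kappaW (tailSum lamTW) w := by
  rw [phiTW, conv_tailSum, Finset.sum_range_succ', Finset.sum_range_succ']
  simp only [phiTK, add_zero]
  exact add_comm _ _

end TailSum

lemma tailSum_lamTW_append_singleton_eq_add_conv (w : Word) (z : Bool) :
    tailSum lamTW (w ++ [z]) = betaW w * amb + etaW w * genB +
      conv etaW (fun u => tailSum lamTW (u ++ [z])) w := by
  rw [tailSum_eq, lamTW_append_singleton, conv_append_singleton, tailSum_eq]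
  simp only [conv_nil, add_zero]
  rw [show lamTW [] = 1 by simp [lamTW], mul_one]
  abel

lemma genC_eq_amb_add : genC = amb + (2 : ℤ) • genB := by
  rw [genC, amb, two_smul]
  abel

lemma omegaW_append_true_eq_add_conv (w : Word) :
    omegaW (w ++ [true]) = betaW w * amb + etaW w * genB +
      conv etaW (fun u => omegaW (u ++ [true])) w := by
  induction w with
  | nil =>
    simp [betaW, etaW, omegaW, genC_eq_amb_add]
  | cons y u ih =>
    have hconv := eq_sub_of_add_eq' ih.symm
    rcases y with _ | _
    · rcases u with _ | ⟨_ | _, u⟩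
      · rw [betaW_eq_zero (by simp), etaW_cons _ (by simp), conv_cons]
        simp only [List.cons_append, List.nil_append, omegaW, etaW_nil, conv_nil, genC_eq_amb_add,
          genD, amb]
        noncomm_ring
      · have hη : conv (fun v => etaW (false :: v)) (fun u => omegaW (u ++ [true])) (false :: u) =
            amb * conv etaW (fun u => omegaW (u ++ [true])) (false :: u) := by
          rw [← conv_mul_left]
          exact conv_congr _ _ (fun i _ => etaW_cons _ (head?_take_false_cons u i)) fun _ _ => rfl
        rw [betaW_eq_zero (by simp), etaW_cons _ (by simp), conv_cons, hη, hconv,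
          betaW_eq_zero (by simp)]
        simp only [List.cons_append, omegaW, genC_eq_amb_add, etaW_nil]
        noncomm_ring
      · have hη : conv (fun v => etaW (false :: true :: v)) (fun u => omegaW (u ++ [true])) u = 0 :=
          Finset.sum_eq_zero fun i _ => by simp [etaW_false_cons_eq_zero]
        rw [betaW_eq_zero (by simp), etaW_false_cons_eq_zero (by simp), conv_cons, conv_cons, hη,
          etaW_cons _ (by simp)]
        simp only [List.cons_append, omegaW, etaW_nil, genC_eq_amb_add, genD, amb]
        noncomm_ring
    · have hη : (fun u => etaW (true :: u)) = fun u => amb * etaW u :=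
        funext fun u => etaW_cons u fun z _ => Bool.le_true z
      rw [betaW_true_cons, etaW_cons _ fun z _ => Bool.le_true z, conv_cons, hη, conv_mul_left,
        hconv]
      simp only [List.cons_append, omegaW, genC_eq_amb_add, etaW_nil]
      noncomm_ring

lemma tailSum_lamTW_append_singleton (z : Bool) (w : Word) :
    tailSum lamTW (w ++ [z]) = omegaW (w ++ [true]) :=
  congrFun (eq_of_eq_add_conv (tailSum_lamTW_append_singleton_eq_add_conv · z)
    omegaW_append_true_eq_add_conv) w

lemma two_smul_phiTW_false_cons_append_singleton {r : Word} (hr : true ∈ r) (x : Bool) :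
    (2 : ℤ) • phiTW (false :: r ++ [x]) =
      (2 : ℤ) • kappaW (false :: r ++ [x]) + omegaW (false :: r ++ [true]) := by
  rw [phiTW_eq, smul_add, conv_append_singleton, kappaW_eq_zero (List.mem_cons_of_mem _ hr),
    omegaW_append_true_eq_add_conv, betaW_eq_zero (by simp), etaW_false_cons_eq_zero hr]
  simp only [zero_mul, add_zero, zero_add, smul_conv, tailSum_lamTW_append_singleton]
  congr 1
  exact conv_congr _ _ (fun i _ => two_smul_kappaW (head?_take_false_cons r i)) fun _ _ => rfl

/-- for an ab-monomial `v` beginning with `a`, an integer `k ≥ 1` and a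
letter `x`, `2·φ_t(v·a·bᵏ·x) = 2·κ(v·a·bᵏ·x) + ω(v·a·b^{k+1})`. -/
theorem two_phiT_abk (w : Word) (k : ℕ) (hk : 1 ≤ k) (x : Bool) :
    (2 : ℤ) • phiTW ((false :: w) ++ [false] ++ List.replicate k true ++ [x]) =
      (2 : ℤ) • kappaW ((false :: w) ++ [false] ++ List.replicate k true ++ [x]) +
        omegaW ((false :: w) ++ [false] ++ List.replicate (k + 1) true) := by
  have hr : true ∈ w ++ [false] ++ List.replicate k true :=
    List.mem_append_right _ (List.mem_replicate.2 ⟨by omega, rfl⟩)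
  rw [List.replicate_succ', ← List.append_assoc]
  simpa using two_smul_phiTW_false_cons_append_singleton hr x

end CD

end
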